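/- arXiv:2208.00387 — 4 statements merged into one kernel-verified Lean document; each statement's English description precedes it below -/
import Mathlib

section
/- Let q : V → V♭ be the quotient map onto the equilocality classes of an undirected graph, and let Adj♭ be the induced adjacency on V♭. Then for every closed set X ⊆ V, the dual of q(X) in the deflation equals the image of the dual of X: ∇♭(q(X)) = q(∇X). -/
/-- The dual of a subset `X` of the vertex set: all vertices adjacent to every element of `X`. -/
def dual {V : Type*} (Adj : V → V → Prop) (X : Set V) : Set V := {y | ∀ x ∈ X, Adj x y}

/-- A subset is closed if it equals its double dual. -/
def Closed {V : Type*} (Adj : V → V → Prop) (X : Set V) : Prop := dual Adj (dual Adj X) = X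

/-- The neighborhood of a vertex. -/
def nbhd {V : Type*} (Adj : V → V → Prop) (x : V) : Set V := {y | Adj x y}

/-- Equilocality (equality of neighborhoods) as a setoid on the vertex set. -/
def equiSetoid {V : Type*} (Adj : V → V → Prop) : Setoid V :=
  ⟨fun x y => nbhd Adj x = nbhd Adj y,
   ⟨fun _ => rfl, fun h => h.symm, fun h₁ h₂ => h₁.trans h₂⟩⟩

theorem stmt_9 {V : Type*} [Fintype V] (Adj : V → V → Prop) (hs : Symmetric Adj)
    (AdjQ : Quotient (equiSetoid Adj) → Quotient (equiSetoid Adj) → Prop)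
    (hQ : ∀ x y : V,
      AdjQ (Quotient.mk (equiSetoid Adj) x) (Quotient.mk (equiSetoid Adj) y) ↔ Adj x y)
    (X : Set V) (hX : Closed Adj X) :
    dual AdjQ (Quotient.mk (equiSetoid Adj) '' X)
      = Quotient.mk (equiSetoid Adj) '' dual Adj X := by
  ext qy
  induction qy using Quotient.inductionOn with
  | h y =>
    constructor
    · intro h
      refine ⟨y, fun x hx => ?_, rfl⟩
      exact (hQ x y).mp (h _ ⟨x, hx, rfl⟩)
    · rintro ⟨z, hz, hzy⟩
      rintro _ ⟨x, hx, rfl⟩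
      rw [hQ]
      have hnz : nbhd Adj z = nbhd Adj y := Quotient.exact hzy
      have : x ∈ nbhd Adj z := hs (hz x hx)
      rw [hnz] at this
      exact hs this
end

section
/- For an undirected graph on a finite vertex set V with quotient map q : V → V♭ onto its deflation, the map X ↦ q(X) is an isomorphism of self-dual lattices from the closed sets of the graph to the closed sets of the deflation: it is an inclusion-preserving bijection between closed sets whose inverse is inclusion-preserving, and it commutes with the duality maps, q(∇X) = ∇♭(q(X)) for closed X. -/
section Dual

variable {V : Type*} {Adj : V → V → Prop}

lemma dual_anti {X Y : Set V} (h : X ⊆ Y) : dual Adj Y ⊆ dual Adj X :=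
  fun _ hy x hx => hy x (h hx)

lemma subset_dual_dual (hs : Symmetric Adj) (X : Set V) : X ⊆ dual Adj (dual Adj X) :=
  fun x hx _ hy => hs (hy x hx)

lemma closed_dual (hs : Symmetric Adj) (X : Set V) : Closed Adj (dual Adj X) :=
  (dual_anti (subset_dual_dual hs X)).antisymm (subset_dual_dual hs _)

lemma mem_dual_iff_subset_nbhd (hs : Symmetric Adj) {X : Set V} {y : V} :
    y ∈ dual Adj X ↔ X ⊆ nbhd Adj y :=
  ⟨fun h x hx => hs (h x hx), fun h _ hx => hs (h hx)⟩

lemma preimage_image_dual (hs : Symmetric Adj) (X : Set V) :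
    Quotient.mk (equiSetoid Adj) ⁻¹' (Quotient.mk (equiSetoid Adj) '' dual Adj X) = dual Adj X := by
  refine (Set.subset_preimage_image _ _).antisymm' ?_
  rintro z ⟨y, hy, hyz⟩
  have hnbhd : nbhd Adj y = nbhd Adj z := Quotient.exact hyz
  rw [mem_dual_iff_subset_nbhd hs] at hy ⊢
  exact hnbhd ▸ hy

lemma Closed.preimage_image_eq (hs : Symmetric Adj) {X : Set V} (hX : Closed Adj X) :
    Quotient.mk (equiSetoid Adj) ⁻¹' (Quotient.mk (equiSetoid Adj) '' X) = X := by
  rw [← hX]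
  exact preimage_image_dual hs _

lemma image_dual (hs : Symmetric Adj)
    {AdjQ : Quotient (equiSetoid Adj) → Quotient (equiSetoid Adj) → Prop}
    (hQ : ∀ x y : V,
      AdjQ (Quotient.mk (equiSetoid Adj) x) (Quotient.mk (equiSetoid Adj) y) ↔ Adj x y)
    (X : Set V) :
    Quotient.mk (equiSetoid Adj) '' dual Adj X = dual AdjQ (Quotient.mk (equiSetoid Adj) '' X) := by
  ext s
  induction s using Quotient.inductionOn with | h y => ?_
  rw [← Set.mem_preimage, preimage_image_dual hs]
  simp only [dual, Set.mem_ofPred_eq, Set.forall_mem_image, hQ]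

end Dual

theorem stmt_10_general {V : Type*} (Adj : V → V → Prop) (hs : Symmetric Adj)
    (AdjQ : Quotient (equiSetoid Adj) → Quotient (equiSetoid Adj) → Prop)
    (hQ : ∀ x y : V,
      AdjQ (Quotient.mk (equiSetoid Adj) x) (Quotient.mk (equiSetoid Adj) y) ↔ Adj x y) :
    (∀ X : Set V, Closed Adj X → Closed AdjQ (Quotient.mk (equiSetoid Adj) '' X)) ∧
    (∀ X Y : Set V, Closed Adj X → Closed Adj Y →
      (X ⊆ Y ↔ Quotient.mk (equiSetoid Adj) '' X ⊆ Quotient.mk (equiSetoid Adj) '' Y)) ∧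
    (∀ S : Set (Quotient (equiSetoid Adj)), Closed AdjQ S →
      ∃ X : Set V, Closed Adj X ∧ Quotient.mk (equiSetoid Adj) '' X = S) ∧
    (∀ X : Set V, Closed Adj X →
      Quotient.mk (equiSetoid Adj) '' dual Adj X
        = dual AdjQ (Quotient.mk (equiSetoid Adj) '' X)) := by
  have hdual := image_dual hs hQ
  refine ⟨fun X hX => ?_, fun X Y hX hY => ?_, fun S hS => ?_, fun X _ => hdual X⟩
  · rw [Closed, ← hdual, ← hdual, hX]
  · refine ⟨Set.image_mono, fun h => ?_⟩
    rw [← hX.preimage_image_eq hs, ← hY.preimage_image_eq hs]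
    exact Set.preimage_mono h
  · refine ⟨dual Adj (dual Adj (Quotient.mk _ ⁻¹' S)), closed_dual hs _, ?_⟩
    rw [hdual, hdual, Set.image_preimage_eq S Quotient.mk_surjective]
    exact hS

theorem stmt_10 {V : Type*} [Fintype V] (Adj : V → V → Prop) (hs : Symmetric Adj)
    (AdjQ : Quotient (equiSetoid Adj) → Quotient (equiSetoid Adj) → Prop)
    (hQ : ∀ x y : V,
      AdjQ (Quotient.mk (equiSetoid Adj) x) (Quotient.mk (equiSetoid Adj) y) ↔ Adj x y) :
    (∀ X : Set V, Closed Adj X → Closed AdjQ (Quotient.mk (equiSetoid Adj) '' X)) ∧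
    (∀ X Y : Set V, Closed Adj X → Closed Adj Y →
      (X ⊆ Y ↔ Quotient.mk (equiSetoid Adj) '' X ⊆ Quotient.mk (equiSetoid Adj) '' Y)) ∧
    (∀ S : Set (Quotient (equiSetoid Adj)), Closed AdjQ S →
      ∃ X : Set V, Closed Adj X ∧ Quotient.mk (equiSetoid Adj) '' X = S) ∧
    (∀ X : Set V, Closed Adj X →
      Quotient.mk (equiSetoid Adj) '' dual Adj X
        = dual AdjQ (Quotient.mk (equiSetoid Adj) '' X)) :=
  stmt_10_general Adj hs AdjQ hQ
end

section
/- Every self-dual lattice is isomorphic to the associated lattice of its duality graph: for a complete lattice L with antitone involution a ↦ a⊥, the map Φ sending a ∈ L to {b ∈ L | b ≤ a} is a bijection from L onto the closed sets of the duality graph, Φ and its inverse are order-preserving, and Φ(a⊥) = ∇(Φ(a)) for all a ∈ L, where ∇ is the dual operator of the duality graph. -/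
/-- The dual operator of the duality graph of a self-dual lattice: the set of all
vertices (lattice elements) adjacent to every element of `X`, where `a` is adjacent
to `b` iff `a ≤ op b`. -/
def dualG {L : Type*} [CompleteLattice L] (op : L → L) (X : Set L) : Set L :=
  {b | ∀ a ∈ X, a ≤ op b}

/-- A subset of the duality graph's vertex set is closed if it equals its double dual. -/
def ClosedG {L : Type*} [CompleteLattice L] (op : L → L) (X : Set L) : Prop :=
  dualG op (dualG op X) = X

lemma dualG_eq {L : Type*} [CompleteLattice L] (op : L → L)
    (hinv : ∀ a : L, op (op a) = a) (hanti : ∀ a b : L, a ≤ b → op b ≤ op a)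
    (X : Set L) : dualG op X = Set.Iic (op (sSup X)) := by
  ext b
  simp only [dualG, Set.mem_setOf_eq, Set.mem_Iic]
  constructor
  · intro h
    have : sSup X ≤ op b := sSup_le h
    have := hanti _ _ this
    rwa [hinv] at this
  · intro h a ha
    have : op (op (sSup X)) ≤ op b := hanti _ _ h
    rw [hinv] at this
    exact le_trans (le_sSup ha) this

lemma dualG_Iic {L : Type*} [CompleteLattice L] (op : L → L)
    (hinv : ∀ a : L, op (op a) = a) (hanti : ∀ a b : L, a ≤ b → op b ≤ op a)
    (a : L) : dualG op (Set.Iic a) = Set.Iic (op a) := by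
  rw [dualG_eq op hinv hanti, csSup_Iic]

theorem stmt_13 {L : Type*} [CompleteLattice L] (op : L → L)
    (hinv : ∀ a : L, op (op a) = a) (hanti : ∀ a b : L, a ≤ b → op b ≤ op a) :
    (∀ a : L, ClosedG op (Set.Iic a)) ∧
    (∀ a b : L, a ≤ b ↔ Set.Iic a ⊆ Set.Iic b) ∧
    (∀ X : Set L, ClosedG op X → ∃ a : L, Set.Iic a = X) ∧
    (∀ a : L, Set.Iic (op a) = dualG op (Set.Iic a)) := by
  refine ⟨?_, ?_, ?_, ?_⟩
  · intro a
    unfold ClosedG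
    rw [dualG_Iic op hinv hanti, dualG_Iic op hinv hanti, hinv]
  · intro a b
    exact ⟨fun h x hx => le_trans hx h, fun h => h (le_refl a)⟩
  · intro X hX
    refine ⟨op (op (sSup X)), ?_⟩
    have : dualG op (dualG op X) = Set.Iic (op (op (sSup X))) := by
      rw [dualG_eq op hinv hanti X, dualG_Iic op hinv hanti]
    rw [← this, hX]
  · intro a
    exact (dualG_Iic op hinv hanti a).symm
end

section
/- A vertex of the duality graph of a self-dual lattice is essential if and only if it is a completely join-irreducible lattice element: for a ∈ L, the neighborhood {b | b ≤ a⊥} is completely meet-irreducible in the associated lattice of the duality graph (every family of closed sets whose intersection equals it contains it) if and only if a is completely join-irreducible in L (every subset A ⊆ L with sSup A = a satisfies a ∈ A). -/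
theorem stmt_15 {L : Type*} [CompleteLattice L] (op : L → L)
    (hinv : ∀ a : L, op (op a) = a) (hanti : ∀ a b : L, a ≤ b → op b ≤ op a)
    (a : L) :
    (∀ F : Set (Set L), (∀ X ∈ F, ClosedG op X) →
        ⋂₀ F = {b : L | b ≤ op a} → {b : L | b ≤ op a} ∈ F) ↔
    (∀ A : Set L, sSup A = a → a ∈ A) := by
  have comm : ∀ x y : L, x ≤ op y ↔ y ≤ op x := by
    intro x y
    constructor <;> intro hx <;>
      · have := hanti _ _ hx; rwa [hinv] at this
  have hdual : ∀ X : Set L, dualG op X = Set.Iic (op (sSup X)) := by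
    intro X
    ext b
    simp only [dualG, Set.mem_setOf_eq, Set.mem_Iic]
    rw [← comm]
    exact ⟨fun h => sSup_le h, fun h x hx => (le_sSup hx).trans h⟩
  have hclosed_iff : ∀ X : Set L, ClosedG op X → X = Set.Iic (sSup X) := by
    intro X hX
    conv_lhs => rw [← hX]
    rw [hdual, hdual, csSup_Iic, hinv]
  have hIicClosed : ∀ c : L, ClosedG op (Set.Iic c) := by
    intro c
    unfold ClosedG
    rw [hdual, hdual, csSup_Iic, csSup_Iic, hinv]
  have op_sInf : ∀ S : Set L, op (sInf S) = sSup (op '' S) := by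
    intro S
    apply le_antisymm
    · have h1 : op (sSup (op '' S)) ≤ sInf S := by
        apply le_sInf
        intro x hx
        rw [← hinv x]
        exact hanti _ _ (le_sSup ⟨x, hx, rfl⟩)
      have := hanti _ _ h1
      rwa [hinv] at this
    · apply sSup_le
      rintro y ⟨x, hx, rfl⟩
      exact hanti _ _ (sInf_le hx)
  constructor
  · intro h A hA
    have h1 : ∀ X ∈ (fun x => Set.Iic (op x)) '' A, ClosedG op X := by
      rintro X ⟨x, hx, rfl⟩; exact hIicClosed _
    have h2 : ⋂₀ ((fun x => Set.Iic (op x)) '' A) = {b : L | b ≤ op a} := by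
      ext b
      simp only [Set.mem_sInter, Set.mem_setOf_eq, Set.mem_image,
        forall_exists_index, and_imp]
      constructor
      · intro hb
        rw [comm, ← hA]
        apply sSup_le
        intro x hx
        rw [comm]
        have := hb (Set.Iic (op x)) x hx rfl
        simpa using this
      · rintro hb X x hx rfl
        exact le_trans hb (hanti _ _ (hA ▸ le_sSup hx))
    obtain ⟨x, hx, hxe⟩ := h _ h1 h2
    have : op x = op a := by
      have := congrArg sSup hxe
      rwa [csSup_Iic, show sSup {b : L | b ≤ op a} = op a from csSup_Iic] at this
    have : x = a := by
      have := congrArg op this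
      rwa [hinv, hinv] at this
    rwa [this] at hx
  · intro h F hF hInt
    have hF' : ∀ X ∈ F, X = Set.Iic (sSup X) := fun X hX => hclosed_iff X (hF X hX)
    have h1 : ⋂₀ F = Set.Iic (sInf (sSup '' F)) := by
      ext b
      simp only [Set.mem_sInter, Set.mem_Iic, le_sInf_iff, Set.mem_image,
        forall_exists_index, and_imp]
      constructor
      · rintro hb c X hX rfl
        have := hb X hX
        rw [hF' X hX] at this; exact this
      · intro hb X hX
        rw [hF' X hX]; exact hb _ X hX rfl
    have h2 : sInf (sSup '' F) = op a := by
      have e : Set.Iic (sInf (sSup '' F)) = {b : L | b ≤ op a} := h1 ▸ hInt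
      have := congrArg sSup e
      rwa [csSup_Iic, show sSup {b : L | b ≤ op a} = op a from csSup_Iic] at this
    have h3 : sSup ((fun X => op (sSup X)) '' F) = a := by
      have e : (fun X => op (sSup X)) '' F = op '' (sSup '' F) := by
        rw [Set.image_image]
      rw [e, ← op_sInf, h2, hinv]
    obtain ⟨X, hX, hXa⟩ := h _ h3
    have hs : sSup X = op a := by
      have := congrArg op hXa
      rwa [hinv] at this
    have : X = {b : L | b ≤ op a} := by
      rw [hF' X hX, hs]; rfl
    rwa [this] at hX
end
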